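/- arXiv:quant-ph/0611294 — 2 statements merged into one kernel-verified Lean document; each statement's English description precedes it below -/
import Mathlib

section
/- Let F be a set, G a normed space, S : F → G, and suppose for each f ∈ F we have a finitely supported probability distribution P_f on G such that P_f{g : ‖S(f) − g‖ < ε/2} ≥ 3/4 for all f. Let f₁,…,f_{k+1} ∈ F with ‖S(f_i) − S(f_j)‖ ≥ ε for i ≠ j, and define for each C ⊆ G the function p_C : F → ℝ, p_C(f) = P_f(C). Let V_i = {g : ‖S(f_i) − g‖ < ε/2}. Then for any two distinct subsets I, J ⊆ {1,…,k+1}, setting C_I = ∪_{i∈I} V_i, one has ‖p_{C_I} − p_{C_J}‖_∞ ≥ 1/2; consequently dim span{p_C : C ⊆ G} ≥ (k+1)/log₂ 5. -/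
open scoped Classical

/-- The probability that the (finitely supported) distribution `μ` assigns to the set `C`. -/
noncomputable def probOf {G : Type*} (μ : G →₀ ℝ) (C : Set G) : ℝ :=
  ∑ g ∈ μ.support.filter (fun g => g ∈ C), μ g

lemma probOf_nonneg {G : Type*} (μ : G →₀ ℝ) (h : ∀ g, 0 ≤ μ g) (C : Set G) :
    0 ≤ probOf μ C :=
  Finset.sum_nonneg fun g _ => h g

lemma probOf_mono {G : Type*} (μ : G →₀ ℝ) (h : ∀ g, 0 ≤ μ g) {C D : Set G} (hCD : C ⊆ D) :
    probOf μ C ≤ probOf μ D := by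
  apply Finset.sum_le_sum_of_subset_of_nonneg
  · intro g hg
    simp only [Finset.mem_filter] at hg ⊢
    exact ⟨hg.1, hCD hg.2⟩
  · intro g _ _; exact h g

lemma probOf_le_total {G : Type*} (μ : G →₀ ℝ) (h : ∀ g, 0 ≤ μ g) (C : Set G) :
    probOf μ C ≤ ∑ g ∈ μ.support, μ g :=
  Finset.sum_le_sum_of_subset_of_nonneg (Finset.filter_subset _ _) fun g _ _ => h g

lemma probOf_add_le_total {G : Type*} (μ : G →₀ ℝ) (h : ∀ g, 0 ≤ μ g) {C D : Set G}
    (hCD : Disjoint C D) : probOf μ C + probOf μ D ≤ ∑ g ∈ μ.support, μ g := by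
  classical
  have hdis : Disjoint (μ.support.filter (fun g => g ∈ C)) (μ.support.filter (fun g => g ∈ D)) := by
    apply Finset.disjoint_left.2
    intro g hg hg'
    simp only [Finset.mem_filter] at hg hg'
    exact Set.disjoint_left.1 hCD hg.2 hg'.2
  rw [probOf, probOf, ← Finset.sum_union hdis]
  exact Finset.sum_le_sum_of_subset_of_nonneg
    (Finset.union_subset (Finset.filter_subset _ _) (Finset.filter_subset _ _))
    fun g _ _ => h g

theorem stmt_11 {F G : Type*} [NormedAddCommGroup G] [NormedSpace ℝ G]
    (S : F → G) (P : F → (G →₀ ℝ))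
    (hpos : ∀ x : F, ∀ g : G, 0 ≤ P x g)
    (hsum : ∀ x : F, ∑ g ∈ (P x).support, P x g = 1)
    (ε : ℝ) (hε : 0 < ε)
    (hguarantee : ∀ x : F, (3 : ℝ) / 4 ≤ probOf (P x) {g | ‖S x - g‖ < ε / 2})
    (k : ℕ) (f : Fin (k + 1) → F)
    (hsep : ∀ i j, i ≠ j → ε ≤ ‖S (f i) - S (f j)‖) :
    (∀ I J : Finset (Fin (k + 1)), I ≠ J →
      (1 : ℝ) / 2 ≤ sSup (Set.range fun x : F =>
        |probOf (P x) (⋃ i ∈ I, {g | ‖S (f i) - g‖ < ε / 2}) -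
         probOf (P x) (⋃ i ∈ J, {g | ‖S (f i) - g‖ < ε / 2})|)) ∧
    (∀ d : ℕ,
      Module.rank ℝ (Submodule.span ℝ (Set.range fun C : Set G => fun x : F => probOf (P x) C)) ≤ d →
      ((k : ℝ) + 1) / Real.logb 2 5 ≤ d) := by
  classical
  -- notation
  set V : Fin (k + 1) → Set G := fun i => {g | ‖S (f i) - g‖ < ε / 2} with hV
  set CI : Finset (Fin (k + 1)) → Set G := fun I => ⋃ i ∈ I, V i with hCI
  -- basic facts
  have prob_nonneg : ∀ x (C : Set G), 0 ≤ probOf (P x) C := fun x C =>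
    probOf_nonneg _ (hpos x) C
  have prob_le_one : ∀ x (C : Set G), probOf (P x) C ≤ 1 := fun x C => by
    have := probOf_le_total (P x) (hpos x) C
    rwa [hsum x] at this
  -- the V i are pairwise disjoint
  have hVdisj : ∀ i j, i ≠ j → Disjoint (V i) (V j) := by
    intro i j hij
    rw [Set.disjoint_left]
    intro g hgi hgj
    have : ‖S (f i) - S (f j)‖ < ε := by
      have : S (f i) - S (f j) = (S (f i) - g) - (S (f j) - g) := by abel
      rw [this]
      calc ‖(S (f i) - g) - (S (f j) - g)‖ ≤ ‖S (f i) - g‖ + ‖S (f j) - g‖ := norm_sub_le _ _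
        _ < ε / 2 + ε / 2 := add_lt_add hgi hgj
        _ = ε := by ring
    exact absurd (hsep i j hij) (not_le.2 this)
  -- key pointwise estimates
  have hmem_lower : ∀ (I : Finset (Fin (k + 1))) (i : Fin (k + 1)), i ∈ I →
      (3 : ℝ) / 4 ≤ probOf (P (f i)) (CI I) := by
    intro I i hi
    refine le_trans (hguarantee (f i)) (probOf_mono _ (hpos (f i)) ?_)
    intro g hg
    exact Set.mem_biUnion hi hg
  have hnotmem_upper : ∀ (I : Finset (Fin (k + 1))) (i : Fin (k + 1)), i ∉ I →
      probOf (P (f i)) (CI I) ≤ (1 : ℝ) / 4 := by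
    intro I i hi
    have hdis : Disjoint (V i) (CI I) := by
      apply Set.disjoint_iUnion₂_right.2
      intro j hj
      exact hVdisj i j (fun h => hi (h ▸ hj))
    have h1 := probOf_add_le_total (P (f i)) (hpos (f i)) hdis
    rw [hsum (f i)] at h1
    have h2 := hguarantee (f i)
    have : probOf (P (f i)) {g | ‖S (f i) - g‖ < ε / 2} = probOf (P (f i)) (V i) := rfl
    linarith [h2, h1]
  -- the separation statement at the witness point `f i`
  have hsep_pt : ∀ I J : Finset (Fin (k + 1)), I ≠ J → ∃ i : Fin (k + 1),
      (1 : ℝ) / 2 ≤ |probOf (P (f i)) (CI I) - probOf (P (f i)) (CI J)| := by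
    intro I J hIJ
    have : ∃ i, (i ∈ I ∧ i ∉ J) ∨ (i ∈ J ∧ i ∉ I) := by
      by_contra h
      push_neg at h
      apply hIJ
      ext i
      constructor
      · exact (h i).1
      · exact (h i).2
    obtain ⟨i, hcase⟩ := this
    refine ⟨i, ?_⟩
    rcases hcase with ⟨hiI, hiJ⟩ | ⟨hiJ, hiI⟩
    · have h1 := hmem_lower I i hiI
      have h2 := hnotmem_upper J i hiJ
      rw [abs_of_nonneg (by linarith)]
      linarith
    · have h1 := hmem_lower J i hiJ
      have h2 := hnotmem_upper I i hiI
      rw [abs_of_nonpos (by linarith)]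
      linarith
  constructor
  · -- Part 1
    intro I J hIJ
    obtain ⟨i, hi⟩ := hsep_pt I J hIJ
    refine le_trans hi (le_csSup ?_ ⟨f i, rfl⟩)
    refine ⟨2, ?_⟩
    rintro y ⟨x, rfl⟩
    have h1 := prob_nonneg x (CI I)
    have h2 := prob_le_one x (CI I)
    have h3 := prob_nonneg x (CI J)
    have h4 := prob_le_one x (CI J)
    have e1 : (⋃ i ∈ I, V i) = CI I := rfl
    have e2 : (⋃ i ∈ J, V i) = CI J := rfl
    rw [e1, e2, abs_le]
    constructor <;> linarith
  · -- Part 2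
    intro d hd
    -- restriction map to the witness points
    set π : (F → ℝ) →ₗ[ℝ] (Fin (k + 1) → ℝ) := LinearMap.funLeft ℝ ℝ f with hπ
    set Vsp := Submodule.span ℝ (Set.range fun C : Set G => fun x : F => probOf (P x) C) with hVsp
    set W := Vsp.map π with hW
    -- W is a submodule of a finite-dim space, with rank ≤ d
    have hVlt : Module.rank ℝ Vsp < Cardinal.aleph0 :=
      lt_of_le_of_lt hd (Cardinal.nat_lt_aleph0 d)
    have h0 := lift_rank_map_le π Vsp
    have h1 : Module.finrank ℝ W ≤ Module.finrank ℝ Vsp := by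
      have := Cardinal.toNat_le_toNat h0 (by simpa using hVlt)
      simpa [Module.finrank, Cardinal.toNat_lift] using this
    have h2 : Module.finrank ℝ Vsp ≤ d := by
      have := Cardinal.toNat_le_toNat hd (Cardinal.nat_lt_aleph0 d)
      simpa [Module.finrank] using this
    have hfinW : Module.finrank ℝ W ≤ d := h1.trans h2
    -- the scaled restricted functions
    set c : Finset (Fin (k + 1)) → (Fin (k + 1) → ℝ) :=
      fun I => fun i => 2 * probOf (P (f i)) (CI I) with hc
    have hcW : ∀ I, c I ∈ W := by
      intro I
      have hq : (fun x : F => probOf (P x) (CI I)) ∈ Vsp :=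
        Submodule.subset_span ⟨CI I, rfl⟩
      have h2q : (2 : ℝ) • (fun x : F => probOf (P x) (CI I)) ∈ Vsp := Vsp.smul_mem 2 hq
      refine ⟨(2 : ℝ) • (fun x : F => probOf (P x) (CI I)), h2q, ?_⟩
      ext i
      simp only [hπ, LinearMap.funLeft_apply, Pi.smul_apply, smul_eq_mul, hc]
    -- separation of the scaled points
    have hsep_c : ∀ I J, I ≠ J → (1 : ℝ) ≤ ‖c I - c J‖ := by
      intro I J hIJ
      obtain ⟨i, hi⟩ := hsep_pt I J hIJ
      calc (1 : ℝ) ≤ 2 * |probOf (P (f i)) (CI I) - probOf (P (f i)) (CI J)| := by linarith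
        _ = ‖(c I - c J) i‖ := by
            simp only [hc, Pi.sub_apply, Real.norm_eq_abs]
            rw [← mul_sub, abs_mul, abs_two]
        _ ≤ ‖c I - c J‖ := norm_le_pi_norm _ i
    have hcinj : Function.Injective fun I : Finset (Fin (k + 1)) => (⟨c I, hcW I⟩ : W) := by
      intro I J h
      by_contra hIJ
      have h0 : c I = c J := congrArg Subtype.val h
      have := hsep_c I J hIJ
      rw [h0, sub_self, norm_zero] at this
      linarith
    -- the packing bound
    set s : Finset W := Finset.univ.image fun I : Finset (Fin (k + 1)) => (⟨c I, hcW I⟩ : W)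
      with hs
    have hcard : s.card = 2 ^ (k + 1) := by
      rw [hs, Finset.card_image_of_injective _ hcinj, Finset.card_univ, Fintype.card_finset,
        Fintype.card_fin]
    have hnorm : ∀ z ∈ s, ‖z‖ ≤ 2 := by
      intro z hz
      rw [hs, Finset.mem_image] at hz
      obtain ⟨I, _, rfl⟩ := hz
      have : ‖(⟨c I, hcW I⟩ : W)‖ = ‖c I‖ := rfl
      rw [this]
      refine pi_norm_le_iff_of_nonneg (by norm_num) |>.2 fun i => ?_
      simp only [hc, Real.norm_eq_abs]
      rw [abs_of_nonneg (by linarith [prob_nonneg (f i) (CI I)])]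
      linarith [prob_le_one (f i) (CI I)]
    have hsep_s : ∀ z ∈ s, ∀ w ∈ s, z ≠ w → 1 ≤ ‖z - w‖ := by
      intro z hz w hw hzw
      rw [hs, Finset.mem_image] at hz hw
      obtain ⟨I, _, rfl⟩ := hz
      obtain ⟨J, _, rfl⟩ := hw
      have hIJ : I ≠ J := fun h => hzw (by rw [h])
      have : ‖(⟨c I, hcW I⟩ : W) - ⟨c J, hcW J⟩‖ = ‖c I - c J‖ := rfl
      rw [this]
      exact hsep_c I J hIJ
    haveI : FiniteDimensional ℝ W := FiniteDimensional.finiteDimensional_submodule W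
    have hpack : s.card ≤ 5 ^ Module.finrank ℝ W :=
      Besicovitch.card_le_of_separated s hnorm hsep_s
    have hkey : (2 : ℕ) ^ (k + 1) ≤ 5 ^ d := by
      calc (2 : ℕ) ^ (k + 1) = s.card := hcard.symm
        _ ≤ 5 ^ Module.finrank ℝ W := hpack
        _ ≤ 5 ^ d := Nat.pow_le_pow_right (by norm_num) hfinW
    -- conclude via logarithms
    have hlogb : (0 : ℝ) < Real.logb 2 5 := Real.logb_pos (by norm_num) (by norm_num)
    rw [div_le_iff₀ hlogb]
    have hkeyR : ((2 : ℝ)) ^ (k + 1) ≤ (5 : ℝ) ^ d := by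
      exact_mod_cast hkey
    have h1 : Real.logb 2 ((2 : ℝ) ^ (k + 1)) ≤ Real.logb 2 ((5 : ℝ) ^ d) :=
      Real.logb_le_logb_of_le (by norm_num) (by positivity) hkeyR
    rw [Real.logb_pow, Real.logb_pow, Real.logb_self_eq_one (by norm_num)] at h1
    push_cast at h1 ⊢
    linarith
end

section
/- For the identity embedding J : L_∞^N → L₁^N restricted to the Boolean cube {0,1}^N ⊆ B(L_∞^N), the k-th inner entropy number satisfies φ_k(J({0,1}^N), L₁^N) ≥ 1/8 whenever k + 1 ≤ 2^{c₁N} with c₁ = (1/4)log₂(4/e), i.e., there exist k+1 points in {0,1}^N (with k+1 = ⌈2^{c₁N}⌉) that are pairwise at L₁^N-distance ≥ 1/4. -/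
/-!
A Gilbert–Varshamov argument. A maximal family of binary words at pairwise Hamming distance
`> r` covers the cube by Hamming balls of radius `r`, so it has at least `2 ^ N / |B(r)|`
members. Weighting each word `v` by `x ^ d(v, s)` with `x = 1/3` gives
`|B(r)| ≤ 3 ^ r (4/3) ^ N`; for `r = ⌊N/4⌋` the family therefore has more than
`2 ^ (c₁ N)` members, the numerical comparison reducing to `64/27 ≤ e`.
-/

/-- The constant c₁ = (1/4)·log₂(4/e). -/
noncomputable def c₁ : ℝ := (1 / 4) * Real.logb 2 (4 / Real.exp 1)

open Finset Fintype

theorem exists_finset_pairwise_not_rel_and_forall_exists_rel {α : Type*} [Finite α]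
    (R : α → α → Prop) (hrefl : ∀ a, R a a)
    (hsymm : ∀ a b, R a b → R b a) :
    ∃ S : Finset α, (S : Set α).Pairwise (fun u v => ¬ R u v) ∧ ∀ w, ∃ s ∈ S, R w s := by
  classical
  have := Fintype.ofFinite α
  obtain ⟨S, hS, hmax⟩ := exists_max_image
    (Finset.univ.filter fun S : Finset α => (S : Set α).Pairwise fun u v => ¬ R u v)
    Finset.card ⟨∅, by simp⟩
  refine ⟨S, (mem_filter.mp hS).2, fun w => ?_⟩
  by_contra! hw
  have hwS : w ∉ S := fun h => hw w h (hrefl w)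
  have := hmax (insert w S) <| mem_filter.mpr ⟨mem_univ _, by
    rw [coe_insert]
    exact (mem_filter.mp hS).2.insert fun b hb _ =>
      ⟨hw b hb, fun h => hw b hb (hsymm _ _ h)⟩⟩
  rw [card_insert_of_notMem hwS] at this
  omega

section Hamming

variable {ι β : Type*} [Fintype ι] [DecidableEq ι] [Fintype β] [DecidableEq β]

theorem sum_pow_hammingDist (s : ι → β) (x : ℝ) :
    ∑ v : ι → β, x ^ hammingDist v s = (1 + ((card β : ℝ) - 1) * x) ^ card ι := by
  have hprod (v : ι → β) : x ^ hammingDist v s = ∏ i, if v i = s i then 1 else x := by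
    rw [prod_ite, prod_const_one, one_mul, prod_const]
    rfl
  have hfactor (a : β) : ∑ b : β, (if b = a then 1 else x) = 1 + ((card β : ℝ) - 1) * x := by
    rw [Fintype.sum_eq_add_sum_compl a, if_pos rfl,
      Finset.sum_congr rfl fun b hb => if_neg (by simpa using hb)]
    simp [card_compl, Nat.cast_pred (Fintype.card_pos_iff.mpr ⟨a⟩)]
  rw [Finset.sum_congr rfl fun v _ => hprod v,
    ← Fintype.prod_sum fun i b => if b = s i then (1 : ℝ) else x]
  simp only [hfactor, prod_const, card_univ]

theorem card_hammingBall_mul_pow_le (s : ι → β) (r : ℕ) {x : ℝ} (hx₀ : 0 ≤ x) (hx₁ : x ≤ 1) :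
    (#{v | hammingDist v s ≤ r} : ℝ) * x ^ r ≤ (1 + ((card β : ℝ) - 1) * x) ^ card ι := by
  rw [← sum_pow_hammingDist s x, ← nsmul_eq_mul, ← sum_const]
  calc ∑ _v ∈ {v | hammingDist v s ≤ r}, x ^ r
      ≤ ∑ v ∈ {v | hammingDist v s ≤ r}, x ^ hammingDist v s :=
        sum_le_sum fun v hv => pow_le_pow_of_le_one hx₀ hx₁ (mem_filter.mp hv).2
    _ ≤ ∑ v, x ^ hammingDist v s :=
        sum_le_sum_of_subset_of_nonneg (filter_subset _ _)
          fun v _ _ => pow_nonneg hx₀ _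

theorem exists_hammingDist_separated_card_mul_le (r : ℕ) {x : ℝ} (hx₀ : 0 ≤ x) (hx₁ : x ≤ 1) :
    ∃ S : Finset (ι → β), (S : Set (ι → β)).Pairwise (fun u v => r < hammingDist u v) ∧
      (card β : ℝ) ^ card ι * x ^ r ≤ #S * (1 + ((card β : ℝ) - 1) * x) ^ card ι := by
  obtain ⟨S, hsep, hcover⟩ := exists_finset_pairwise_not_rel_and_forall_exists_rel
    (fun u v : ι → β => hammingDist u v ≤ r) (fun u => by simp)
    (fun u v h => hammingDist_comm u v ▸ h)
  refine ⟨S, hsep.mono' fun u v h => not_le.mp h, ?_⟩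
  have hcount : card β ^ card ι ≤ ∑ s ∈ S, #{v | hammingDist v s ≤ r} :=
    calc card β ^ card ι = #(univ : Finset (ι → β)) := by simp
      _ ≤ #(S.biUnion fun s => {v | hammingDist v s ≤ r}) := card_le_card fun w _ => by
          obtain ⟨s, hs, hws⟩ := hcover w
          exact mem_biUnion.mpr ⟨s, hs, mem_filter.mpr ⟨mem_univ w, hws⟩⟩
      _ ≤ _ := card_biUnion_le
  calc (card β : ℝ) ^ card ι * x ^ r
      ≤ (∑ s ∈ S, (#{v | hammingDist v s ≤ r} : ℝ)) * x ^ r := by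
        gcongr
        exact_mod_cast hcount
    _ = ∑ s ∈ S, (#{v | hammingDist v s ≤ r} : ℝ) * x ^ r := sum_mul _ _ _
    _ ≤ ∑ _s ∈ S, (1 + ((card β : ℝ) - 1) * x) ^ card ι :=
        sum_le_sum fun s _ => card_hammingBall_mul_pow_le s r hx₀ hx₁
    _ = #S * (1 + ((card β : ℝ) - 1) * x) ^ card ι := by rw [sum_const, nsmul_eq_mul]

end Hamming

theorem six_mul_log_two_sub_three_mul_log_three_le_one : 6 * Real.log 2 - 3 * Real.log 3 ≤ 1 := by
  have h : Real.log (2 ^ 6 / 3 ^ 3) ≤ 1 := by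
    rw [Real.log_le_iff_le_exp (by norm_num)]
    linarith [Real.exp_one_gt_d9]
  rwa [Real.log_div (by norm_num) (by norm_num), Real.log_pow, Real.log_pow] at h

theorem c₁_mul_log_two : c₁ * Real.log 2 = (2 * Real.log 2 - 1) / 4 := by
  rw [c₁, Real.logb, Real.log_div (by norm_num) (Real.exp_ne_zero 1), Real.log_exp,
    show (4 : ℝ) = 2 ^ 2 by norm_num, Real.log_pow]
  field_simp
  ring

theorem two_rpow_c₁_mul_mul_le (N : ℕ) :
    (2 : ℝ) ^ (c₁ * N) * (4 / 3) ^ N ≤ 2 ^ N * (1 / 3) ^ (N / 4) := by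
  have hlog : Real.log 2 * (c₁ * N) + Real.log (4 / 3) * N ≤
      Real.log 2 * N + Real.log (1 / 3) * (N / 4) := by
    have h43 : Real.log (4 / 3) = 2 * Real.log 2 - Real.log 3 := by
      rw [Real.log_div (by norm_num) (by norm_num), show (4 : ℝ) = 2 ^ 2 by norm_num,
        Real.log_pow, Nat.cast_ofNat]
    rw [h43, one_div, Real.log_inv]
    linear_combination (N : ℝ) * c₁_mul_log_two
      + (N / 4 : ℝ) * six_mul_log_two_sub_three_mul_log_three_le_one
  calc (2 : ℝ) ^ (c₁ * N) * (4 / 3) ^ N ≤ 2 ^ N * (1 / 3) ^ ((N : ℝ) / 4) := by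
        rw [← Real.rpow_natCast, ← Real.rpow_natCast 2, Real.rpow_def_of_pos (by norm_num),
          Real.rpow_def_of_pos (by norm_num), Real.rpow_def_of_pos (by norm_num),
          Real.rpow_def_of_pos (by norm_num), ← Real.exp_add, ← Real.exp_add, Real.exp_le_exp]
        exact hlog
    _ ≤ 2 ^ N * (1 / 3) ^ (N / 4) := by
        rw [← Real.rpow_natCast (1 / 3)]
        exact mul_le_mul_of_nonneg_left
          (Real.rpow_le_rpow_of_exponent_ge (by norm_num) (by norm_num) Nat.cast_div_le)
          (by positivity)

theorem stmt_13_general (N : ℕ) (k : ℕ)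
    (hkN : ((k : ℝ) + 1) ≤ (2 : ℝ) ^ (c₁ * N)) :
    ∃ u : Fin (k + 1) → (Fin N → Bool),
      ∀ i j, i ≠ j →
        (1 : ℝ) / 4 ≤ ((Finset.univ.filter fun ℓ => u i ℓ ≠ u j ℓ).card : ℝ) / N := by
  obtain ⟨S, hsep, hcard⟩ := exists_hammingDist_separated_card_mul_le (ι := Fin N) (β := Bool)
    (N / 4) (x := 1 / 3) (by norm_num) (by norm_num)
  norm_num at hcard
  have hkS : k + 1 ≤ #S := by
    have : ((k : ℝ) + 1) * (4 / 3) ^ N ≤ #S * (4 / 3) ^ N :=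
      calc ((k : ℝ) + 1) * (4 / 3) ^ N ≤ 2 ^ (c₁ * N) * (4 / 3) ^ N := by gcongr
        _ ≤ _ := (two_rpow_c₁_mul_mul_le N).trans hcard
    exact_mod_cast le_of_mul_le_mul_right this (by positivity)
  obtain ⟨e⟩ := Function.Embedding.nonempty_of_card_le (α := Fin (k + 1)) (β := S)
    (by simpa using hkS)
  refine ⟨fun i => e i, fun i j hij => ?_⟩
  have hne : (e i : Fin N → Bool) ≠ e j := fun h => hij (e.injective (Subtype.ext h))
  have hd : N / 4 < hammingDist (e i : Fin N → Bool) (e j) := hsep (e i).2 (e j).2 hne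
  have hN : 0 < N := by
    simpa using (hammingDist_pos.mpr hne).trans_le hammingDist_le_card_fintype
  change (1 : ℝ) / 4 ≤ (hammingDist (e i : Fin N → Bool) (e j) : ℝ) / N
  rw [div_le_div_iff₀ (by norm_num) (by exact_mod_cast hN)]
  exact_mod_cast (by omega : 1 * N ≤ hammingDist (e i : Fin N → Bool) (e j) * 4)

theorem stmt_13 (N : ℕ) (k : ℕ) (hk : 1 ≤ k)
    (hkN : ((k : ℝ) + 1) ≤ (2 : ℝ) ^ (c₁ * N)) :
    ∃ u : Fin (k + 1) → (Fin N → Bool),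
      ∀ i j, i ≠ j →
        (1 : ℝ) / 4 ≤ ((Finset.univ.filter fun ℓ => u i ℓ ≠ u j ℓ).card : ℝ) / N :=
  stmt_13_general N k hkN
end
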